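/- arXiv:1507.05490 — 4 statements merged into one kernel-verified Lean document; each statement's English description precedes it below -/
import Mathlib

section
/- Let p be a probability mass function on D_{m−i+1} = {−2^{m−i},…,2^{m−i}} that is symmetric: p(−k) = p(k) for all k. Define q(j) = ∑_{x+y ≡ j mod (2^m+1), x,y ∈ D_{m−i+1}} p(x)p(y) for j ∈ D_{m−i}. Then q is symmetric, q(−j) = q(j), and for 0 ≤ j ≤ 2^{m−i−1}, q(j) = ∑_{k=0}^{j} p(k)p(j−k) + 2∑_{k=j+1}^{2^{m−i}} p(k)p(k−j). -/
/-!
Negating both summands shows `q (-j) = q j`. For `0 ≤ j ≤ 2^(m-i-1)` and `x, y ∈ D_{m-i+1}` we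
have `|x + y - j| ≤ 2^(m-i+1) + 2^(m-i-1) < 2^m + 1`, so the congruence `x + y ≡ j` is an
equality and `q j` is the plain convolution `∑ p x * p (j - x)`. Splitting its range at `0` and
`j`, the terms with `x < 0` and those with `x > j` both become `p k * p (k - j)` by symmetry of `p`.
-/

open MeasureTheory

open Finset

/-- `Dm k = {-2^(k-1), …, 2^(k-1)}`, the symmetric set of representatives of
`ℤ/(2^k+1)ℤ` (for `k ≥ 1`). -/
noncomputable def Dm (k : ℕ) : Finset ℤ := Finset.Icc (-(2 ^ (k - 1) : ℤ)) (2 ^ (k - 1))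

lemma Dm_nonempty (k : ℕ) : (Dm k).Nonempty :=
  ⟨0, Finset.mem_Icc.mpr ⟨neg_nonpos.mpr (by positivity), by positivity⟩⟩

/-- Wagner's tree map `H_i` with modulus `M = 2^m+1`; `none` is the failure state `Δ`.
At each level the two halves are combined, surviving only if the sum modulo `M`
has a representative in `D_{m-i}`. -/
noncomputable def wagner (m : ℕ) : (i : ℕ) → (Fin (2 ^ i) → ℤ) → Option ℤ
  | 0, x => some (x 0)
  | (i + 1), x =>
    match wagner m i (fun k => x ⟨k.1,
          lt_of_lt_of_le k.2 (Nat.pow_le_pow_right (by norm_num) (Nat.le_succ i))⟩),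
        wagner m i (fun k => x ⟨2 ^ i + k.1, by
          have hk := k.2; have h2 : (2:ℕ) ^ (i+1) = 2 ^ i + 2 ^ i := by ring
          omega⟩) with
    | some a, some b =>
        if h : ∃ c ∈ Dm (m - (i + 1)), a + b ≡ c [ZMOD ((2 : ℤ) ^ m + 1)] then some h.choose
        else none
    | _, _ => none

/-- the sample space of vectors of length `2^i` with entries in `Dm m`. -/
noncomputable def vecSpace (m i : ℕ) : Finset (Fin (2 ^ i) → ℤ) :=
  Fintype.piFinset fun _ => Dm m

lemma vecSpace_nonempty (m i : ℕ) : (vecSpace m i).Nonempty :=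
  ⟨fun _ => 0, by
    simp only [vecSpace, Fintype.mem_piFinset]
    intro _
    simp only [Dm, Finset.mem_Icc]
    exact ⟨neg_nonpos.mpr (by positivity), by positivity⟩⟩

/-- `p_{i,m}(j) = P(H_i(x) = j)` for `x` with i.i.d. entries uniform on `Dm m`. -/
noncomputable def pim (m i : ℕ) (j : ℤ) : ℝ :=
  ((vecSpace m i).filter (fun x => wagner m i x = some j)).card / (vecSpace m i).card

theorem Int.ModEq.eq_of_abs_sub_lt {a b n : ℤ} (h : a ≡ b [ZMOD n]) (hlt : |b - a| < n) :
    a = b :=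
  (sub_eq_zero.mp (Int.eq_zero_of_abs_lt_dvd h.dvd hlt)).symm

theorem Dm_succ (k : ℕ) : Dm (k + 1) = Icc (-2 ^ k) (2 ^ k) := by
  simp [Dm]

theorem Finset.sum_Icc_int_split {M : Type*} [AddCommMonoid M] (f : ℤ → M) {a b c : ℤ}
    (hab : a ≤ b + 1) (hbc : b ≤ c) :
    ∑ x ∈ Icc a c, f x = ∑ x ∈ Icc a b, f x + ∑ x ∈ Icc (b + 1) c, f x := by
  rw [← sum_union (disjoint_left.mpr fun x hx hx' => by simp only [mem_Icc] at hx hx'; omega)]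
  congr 1
  ext x
  simp only [mem_union, mem_Icc]
  omega

noncomputable def modConv (p : ℤ → ℝ) (S : Finset ℤ) (M j : ℤ) : ℝ :=
  ∑ z ∈ (S ×ˢ S).filter (fun z => z.1 + z.2 ≡ j [ZMOD M]), p z.1 * p z.2

theorem modConv_Icc_eq_sum {p : ℤ → ℝ} {a M j : ℤ} (hj : 0 ≤ j) (hM : 2 * a + j < M) :
    modConv p (Icc (-a) a) M j = ∑ x ∈ Icc (j - a) a, p x * p (j - x) := by
  have hsum : ∀ z ∈ (Icc (-a) a ×ˢ Icc (-a) a).filter (fun z => z.1 + z.2 ≡ j [ZMOD M]),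
      z.1 + z.2 = j := by
    intro z hz
    simp only [mem_filter, mem_product, mem_Icc] at hz
    exact hz.2.eq_of_abs_sub_lt (abs_lt.mpr ⟨by omega, by omega⟩)
  refine sum_nbij' (·.1) (fun x => (x, j - x)) ?_ ?_ ?_ (fun _ _ => rfl) ?_
  · intro z hz
    have := hsum z hz
    simp only [mem_filter, mem_product, mem_Icc] at hz ⊢
    omega
  · intro x hx
    simp only [mem_filter, mem_product, mem_Icc] at hx ⊢
    exact ⟨⟨⟨by omega, by omega⟩, by omega, by omega⟩, by rw [add_sub_cancel]⟩
  · intro z hz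
    rw [← hsum z hz, add_sub_cancel_left]
  · intro z hz
    rw [← hsum z hz, add_sub_cancel_left]

theorem modConv_Icc_neg {p : ℤ → ℝ} (hp : ∀ k, p (-k) = p k) (a M j : ℤ) :
    modConv p (Icc (-a) a) M (-j) = modConv p (Icc (-a) a) M j := by
  refine sum_nbij' (fun z => -z) (fun z => -z) ?_ ?_ (fun _ _ => neg_neg _)
    (fun _ _ => neg_neg _) (fun z _ => by simp [hp])
  all_goals
    intro z hz
    simp only [mem_filter, mem_product, mem_Icc, Prod.fst_neg, Prod.snd_neg] at hz ⊢
    refine ⟨⟨by omega, by omega⟩, ?_⟩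
    simpa [neg_add, add_comm] using hz.2.neg

theorem sum_Icc_mul_sub_eq {p : ℤ → ℝ} (hp : ∀ k, p (-k) = p k) {a j : ℤ} (hj : 0 ≤ j) (hja : j ≤ a) :
    ∑ x ∈ Icc (j - a) a, p x * p (j - x) =
      ∑ k ∈ Icc 0 j, p k * p (j - k) + 2 * ∑ k ∈ Icc (j + 1) a, p k * p (k - j) := by
  have hneg : ∑ x ∈ Icc (j - a) (-1), p x * p (j - x) = ∑ k ∈ Icc (j + 1) a, p k * p (k - j) := by
    refine sum_nbij' (j - ·) (j - ·) ?_ ?_ (fun _ _ => sub_sub_cancel _ _)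
      (fun _ _ => sub_sub_cancel _ _) fun x _ => ?_
    · intro x hx
      simp only [mem_Icc] at hx ⊢
      omega
    · intro x hx
      simp only [mem_Icc] at hx ⊢
      omega
    · rw [sub_sub_cancel_left, hp, mul_comm]
  have hpos : ∑ x ∈ Icc (j + 1) a, p x * p (j - x) = ∑ k ∈ Icc (j + 1) a, p k * p (k - j) :=
    sum_congr rfl fun x _ => by rw [← neg_sub, hp]
  rw [sum_Icc_int_split _ (by omega : j - a ≤ -1 + 1) (by omega : (-1 : ℤ) ≤ a),
    neg_add_cancel, sum_Icc_int_split _ (by omega : (0 : ℤ) ≤ j + 1) hja, hneg, hpos]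
  ring

theorem key_recursion_pmf_general (m i : ℕ) (hi : 2 ≤ i) (him : i ≤ m - 1)
    (p : ℤ → ℝ) (hsymm : ∀ k : ℤ, p (-k) = p k) :
    let q : ℤ → ℝ := fun j =>
      ∑ x ∈ ((Dm (m - i + 1)) ×ˢ (Dm (m - i + 1))).filter
          (fun x => x.1 + x.2 ≡ j [ZMOD ((2:ℤ) ^ m + 1)]), p x.1 * p x.2
    (∀ j ∈ Dm (m - i), q (-j) = q j) ∧
      ∀ j : ℤ, 0 ≤ j → j ≤ 2 ^ (m - i - 1) →
        q j = (∑ k ∈ Finset.Icc (0:ℤ) j, p k * p (j - k)) +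
          2 * ∑ k ∈ Finset.Icc (j + 1) ((2:ℤ) ^ (m - i)), p k * p (k - j) := by
  intro q
  have hq : q = modConv p (Icc (-2 ^ (m - i)) (2 ^ (m - i))) (2 ^ m + 1) := by
    rw [← Dm_succ]
    rfl
  obtain ⟨k, hk⟩ : ∃ k, m - i = k + 1 := ⟨m - i - 1, by omega⟩
  have hbound : 2 * 2 ^ (k + 1) + 2 ^ k < (2 : ℤ) ^ m + 1 := by
    have hm : (2 : ℤ) ^ (k + 3) ≤ 2 ^ m := pow_le_pow_right₀ (by norm_num) (by omega)
    rw [pow_add] at hm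
    linarith [pow_succ (2 : ℤ) k, pow_pos (two_pos : (0 : ℤ) < 2) k]
  rw [hq, hk, Nat.add_sub_cancel]
  refine ⟨fun j _ => modConv_Icc_neg hsymm _ _ j, fun j hj0 hj => ?_⟩
  rw [modConv_Icc_eq_sum hj0 (by linarith),
    sum_Icc_mul_sub_eq hsymm hj0 (by linarith [pow_succ (2 : ℤ) k])]

/-- The convolution of a symmetric pmf on `D_{m-i+1}` modulo `2^m+1` is symmetric
and satisfies the key recursion. -/
theorem key_recursion_pmf (m i : ℕ) (hm : 2 ≤ m) (hi : 2 ≤ i) (him : i ≤ m - 1)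
    (p : ℤ → ℝ) (hsupp : ∀ k : ℤ, k ∉ Dm (m - i + 1) → p k = 0)
    (hpos : ∀ k : ℤ, 0 ≤ p k) (hsum : ∑ k ∈ Dm (m - i + 1), p k = 1)
    (hsymm : ∀ k : ℤ, p (-k) = p k) :
    let q : ℤ → ℝ := fun j =>
      ∑ x ∈ ((Dm (m - i + 1)) ×ˢ (Dm (m - i + 1))).filter
          (fun x => x.1 + x.2 ≡ j [ZMOD ((2:ℤ) ^ m + 1)]), p x.1 * p x.2
    (∀ j ∈ Dm (m - i), q (-j) = q j) ∧
      ∀ j : ℤ, 0 ≤ j → j ≤ 2 ^ (m - i - 1) →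
        q j = (∑ k ∈ Finset.Icc (0:ℤ) j, p k * p (j - k)) +
          2 * ∑ k ∈ Finset.Icc (j + 1) ((2:ℤ) ^ (m - i)), p k * p (k - j) :=
  key_recursion_pmf_general m i hi him p hsymm
end

section
/- Each φ_n defined by the integral recursion φ_1 ≡ 1, φ_n(x) = ∫_0^x φ_{n−1}(u)φ_{n−1}(x−u) du + 2∫_x^{2^{−n}} φ_{n−1}(u)φ_{n−1}(u−x) du, is a nonnegative continuous (indeed polynomial) function on [0, 2^{−n}], and is monotonically non-increasing on [0, 2^{−n}] for every n ≥ 1. -/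
/-- The polynomials `φ_n`: `φ_1 ≡ 1` and
`φ_n(x) = ∫_0^x φ_{n-1}(u)φ_{n-1}(x-u) du + 2∫_x^{2^{-n}} φ_{n-1}(u)φ_{n-1}(u-x) du`. -/
noncomputable def phi : ℕ → ℝ → ℝ
  | 0, _ => 1
  | 1, _ => 1
  | (n + 2), x =>
      (∫ u in (0:ℝ)..x, phi (n + 1) u * phi (n + 1) (x - u)) +
        2 * ∫ u in x..((2:ℝ) ^ (-(n + 2 : ℤ))), phi (n + 1) u * phi (n + 1) (u - x)

/-!
The recursion preserves the property of agreeing on `[0, c]` with a polynomial that is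
nonnegative and non-increasing there. Polynomiality and the derivative of the next `φ` come from
the Leibniz rule for integrands that are polynomial in both variables, proved algebraically
through an antiderivative in the integration variable. Writing `p` for the previous `φ`, the
derivative is `-p(x)p(0) + ∫₀ˣ p(u)p'(x-u) du - 2∫ₓᶜ p(u)p'(u-x) du`; since `p' ≤ 0` and `p`
decreases, after one integration by parts it is at most `p(c)² - 2p(c)p(c-x) ≤ -p(c)² ≤ 0`.
-/

open Polynomial Polynomial.Bivariate

namespace Polynomial

variable {R : Type*}

theorem exists_derivative_eq [CommRing R] [Algebra ℚ R] (p : R[X]) :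
    ∃ q : R[X], derivative q = p := by
  induction p using Polynomial.induction_on' with
  | add p q hp hq =>
    obtain ⟨P, rfl⟩ := hp
    obtain ⟨Q, rfl⟩ := hq
    exact ⟨P + Q, derivative_add⟩
  | monomial n a =>
    refine ⟨monomial (n + 1) (((n + 1 : ℚ)⁻¹) • a), ?_⟩
    rw [derivative_monomial, Nat.add_sub_cancel, smul_mul_assoc, ← nsmul_eq_mul',
      ← Nat.cast_smul_eq_nsmul ℚ, smul_smul]
    push_cast
    rw [inv_mul_cancel₀ (by positivity), one_smul]

noncomputable def derivX [Semiring R] (F : R[X][Y]) : R[X][Y] :=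
  F.sum fun n a => monomial n (derivative a)

section Semiring
variable [Semiring R]

@[simp]
theorem derivX_add (F G : R[X][Y]) : derivX (F + G) = derivX F + derivX G :=
  sum_add_index _ _ _ (by simp) (by simp)

@[simp]
theorem derivX_monomial (n : ℕ) (a : R[X]) : derivX (monomial n a) = monomial n (derivative a) :=
  sum_monomial_index _ _ (by simp)

theorem derivative_derivX (F : R[X][Y]) : derivative (derivX F) = derivX (derivative F) := by
  induction F using Polynomial.induction_on' with
  | add F G hF hG => simp [hF, hG]
  | monomial n a => simp [derivative_monomial, derivative_mul]

end Semiring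

@[simp]
theorem evalEval_monomial [CommSemiring R] (x y : R) (n : ℕ) (a : R[X]) :
    (monomial n a).evalEval x y = a.eval x * y ^ n := by
  simp [evalEval, eval_monomial]

theorem evalEval_map_C_mul_comp_C_X_sub_Y [CommRing R] (p : R[X]) (x u : R) :
    (p.map C * (p.map C).comp (C X - Y)).evalEval x u = p.eval u * p.eval (x - u) := by
  simp [evalEval, eval_map, ← comp.eq_1]

theorem evalEval_map_C_mul_comp_Y_sub_C_X [CommRing R] (p : R[X]) (x u : R) :
    (p.map C * (p.map C).comp (Y - C X)).evalEval x u = p.eval u * p.eval (u - x) := by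
  simp [evalEval, eval_map, ← comp.eq_1]

theorem evalEval_self_eq_eval [CommSemiring R] (F : R[X][Y]) (x : R) :
    F.evalEval x x = (F.eval X).eval x := by
  rw [← coe_evalRingHom, eval, hom_eval₂]
  simp [eval₂_evalRingHom]

section Calculus
variable {𝕜 : Type*} [NontriviallyNormedField 𝕜]

theorem hasDerivAt_evalEval_right (F : 𝕜[X][Y]) (x y : 𝕜) :
    HasDerivAt (fun y => F.evalEval x y) ((derivative F).evalEval x y) y := by
  simp only [← map_evalRingHom_eval, ← derivative_map]
  exact Polynomial.hasDerivAt _ _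

theorem hasDerivAt_evalEval_left (F : 𝕜[X][Y]) (x y : 𝕜) :
    HasDerivAt (fun x => F.evalEval x y) ((derivX F).evalEval x y) x := by
  induction F using Polynomial.induction_on' with
  | add F G hF hG => simpa only [derivX_add, evalEval_add] using hF.fun_add hG
  | monomial n a => simpa using (Polynomial.hasDerivAt a x).mul_const (y ^ n)

theorem hasDerivAt_evalEval_diag (F : 𝕜[X][Y]) (x : 𝕜) :
    HasDerivAt (fun x => F.evalEval x x)
      ((derivative F).evalEval x x + (derivX F).evalEval x x) x := by
  induction F using Polynomial.induction_on' with
  | add F G hF hG =>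
    simp only [evalEval_add, derivative_add, derivX_add]
    exact (hF.fun_add hG).congr_deriv (by ring)
  | monomial n a =>
    simp only [evalEval_monomial, derivative_monomial, derivX_monomial, eval_mul, eval_natCast]
    refine ((Polynomial.hasDerivAt a x).fun_mul (hasDerivAt_pow n x)).congr_deriv ?_
    ring

end Calculus

section Integral

open intervalIntegral

theorem integral_evalEval_derivative (F : ℝ[X][Y]) (x a b : ℝ) :
    ∫ u in a..b, (derivative F).evalEval x u = F.evalEval x b - F.evalEval x a :=
  integral_eq_sub_of_hasDerivAt (fun u _ => hasDerivAt_evalEval_right F x u)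
    ((continuous_iff_continuousAt.2 fun u =>
      (hasDerivAt_evalEval_right (derivative F) x u).continuousAt).intervalIntegrable a b)

theorem hasDerivAt_integral_evalEval (F : ℝ[X][Y]) (a x : ℝ) :
    HasDerivAt (fun x => ∫ u in a..x, F.evalEval x u)
      (F.evalEval x x + ∫ u in a..x, (derivX F).evalEval x u) x := by
  obtain ⟨G, rfl⟩ := exists_derivative_eq F
  simp only [← derivative_derivX, integral_evalEval_derivative]
  exact ((hasDerivAt_evalEval_diag G x).sub (hasDerivAt_evalEval_left G x a)).congr_deriv
    (by ring)

theorem exists_eval_eq_integral_evalEval (F : ℝ[X][Y]) (a : ℝ) :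
    ∃ q : ℝ[X], ∀ x, ∫ u in a..x, F.evalEval x u = q.eval x := by
  obtain ⟨G, rfl⟩ := exists_derivative_eq F
  exact ⟨G.eval X - G.eval (C a), fun x => by
    simp [integral_evalEval_derivative, evalEval_self_eq_eval]⟩

theorem hasDerivAt_integral_of_evalEval {f f' : ℝ → ℝ → ℝ} (F : ℝ[X][Y])
    (hF : ∀ x u, F.evalEval x u = f x u) (hf' : ∀ x u, HasDerivAt (f · u) (f' x u) x)
    (a x : ℝ) :
    HasDerivAt (fun x => ∫ u in a..x, f x u) (f x x + ∫ u in a..x, f' x u) x := by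
  obtain rfl : (fun x u => F.evalEval x u) = f := funext₂ hF
  obtain rfl : (fun x u => (derivX F).evalEval x u) = f' :=
    funext₂ fun x u => (hasDerivAt_evalEval_left F x u).unique (hf' x u)
  exact hasDerivAt_integral_evalEval F a x

end Integral

theorem derivative_eval_nonpos_of_antitoneOn {p : ℝ[X]} {a b t : ℝ}
    (hp : AntitoneOn p.eval (Set.Icc a b)) (ht : t ∈ Set.Ioo a b) : p.derivative.eval t ≤ 0 := by
  rw [← Polynomial.deriv, ← derivWithin_of_isOpen isOpen_Ioo ht]
  exact (hp.mono Set.Ioo_subset_Icc_self).derivWithin_nonpos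

end Polynomial

open Set intervalIntegral

noncomputable def phiStep (f : ℝ → ℝ) (c x : ℝ) : ℝ :=
  (∫ u in (0:ℝ)..x, f u * f (x - u)) + 2 * ∫ u in x..c, f u * f (u - x)

theorem phi_add_two (n : ℕ) :
    phi (n + 2) = phiStep (phi (n + 1)) ((2:ℝ) ^ (-(n + 2 : ℤ))) := rfl

theorem phiStep_congr {f g : ℝ → ℝ} {c : ℝ} (h : EqOn f g (Icc 0 c)) :
    EqOn (phiStep f c) (phiStep g c) (Icc 0 c) := by
  intro x ⟨hx0, hxc⟩
  have h₁ : EqOn (fun u => f u * f (x - u)) (fun u => g u * g (x - u)) (uIcc 0 x) := by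
    intro u hu
    rw [uIcc_of_le hx0] at hu
    have : x - u ∈ Icc 0 c := ⟨by linarith [hu.2], by linarith [hu.1]⟩
    simp only [h ⟨hu.1, hu.2.trans hxc⟩, h this]
  have h₂ : EqOn (fun u => f u * f (u - x)) (fun u => g u * g (u - x)) (uIcc x c) := by
    intro u hu
    rw [uIcc_of_le hxc] at hu
    have : u - x ∈ Icc 0 c := ⟨by linarith [hu.1], by linarith [hu.2]⟩
    simp only [h ⟨hx0.trans hu.1, hu.2⟩, h this]
  simp only [phiStep, integral_congr h₁, integral_congr h₂]

theorem phiStep_nonneg {f : ℝ → ℝ} {c x : ℝ} (hf : ∀ t ∈ Icc 0 c, 0 ≤ f t) (hx : x ∈ Icc 0 c) :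
    0 ≤ phiStep f c x := by
  obtain ⟨hx0, hxc⟩ := hx
  have h₁ : 0 ≤ ∫ u in (0:ℝ)..x, f u * f (x - u) := integral_nonneg hx0 fun u hu =>
    mul_nonneg (hf u ⟨hu.1, hu.2.trans hxc⟩) (hf _ ⟨by linarith [hu.2], by linarith [hu.1]⟩)
  have h₂ : 0 ≤ ∫ u in x..c, f u * f (u - x) := integral_nonneg hxc fun u hu =>
    mul_nonneg (hf u ⟨hx0.trans hu.1, hu.2⟩) (hf _ ⟨by linarith [hu.1], by linarith [hu.2]⟩)
  unfold phiStep
  positivity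

theorem phiStep_eq_sub (f : ℝ → ℝ) (c : ℝ) :
    phiStep f c = fun x =>
      (∫ u in (0:ℝ)..x, f u * f (x - u)) - 2 * ∫ u in c..x, f u * f (u - x) := by
  funext x
  rw [phiStep, integral_symm x c]
  ring

theorem exists_eval_eq_phiStep (p : ℝ[X]) (c : ℝ) :
    ∃ q : ℝ[X], ∀ x, phiStep p.eval c x = q.eval x := by
  obtain ⟨q₁, hq₁⟩ := exists_eval_eq_integral_evalEval (p.map C * (p.map C).comp (C X - Y)) 0
  obtain ⟨q₂, hq₂⟩ := exists_eval_eq_integral_evalEval (p.map C * (p.map C).comp (Y - C X)) c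
  simp only [evalEval_map_C_mul_comp_C_X_sub_Y, evalEval_map_C_mul_comp_Y_sub_C_X] at hq₁ hq₂
  exact ⟨q₁ - C 2 * q₂, fun x => by simp [phiStep_eq_sub, hq₁, hq₂]⟩

theorem hasDerivAt_phiStep (p : ℝ[X]) (c x : ℝ) :
    HasDerivAt (phiStep p.eval c)
      (-(p.eval x * p.eval 0) + (∫ u in (0:ℝ)..x, p.eval u * p.derivative.eval (x - u))
        - 2 * ∫ u in x..c, p.eval u * p.derivative.eval (u - x)) x := by
  have h₁ := hasDerivAt_integral_of_evalEval (p.map C * (p.map C).comp (C X - Y))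
    (evalEval_map_C_mul_comp_C_X_sub_Y p)
    (fun x u => ((p.hasDerivAt (x - u)).comp_sub_const x u).const_mul (p.eval u)) 0 x
  have h₂ := hasDerivAt_integral_of_evalEval (p.map C * (p.map C).comp (Y - C X))
    (evalEval_map_C_mul_comp_Y_sub_C_X p)
    (fun x u => ((p.hasDerivAt (u - x)).comp_const_sub u x).const_mul (p.eval u)) c x
  rw [phiStep_eq_sub]
  refine (h₁.sub (h₂.const_mul 2)).congr_deriv ?_
  simp only [sub_self, mul_neg, integral_neg, integral_symm c x]
  ring

section PhiStepAntitone

variable {p : ℝ[X]} {c x : ℝ}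

theorem integral_eval_mul_derivative_eval_sub_le (hp : AntitoneOn p.eval (Icc 0 c))
    (hx : x ∈ Icc 0 c) :
    ∫ u in (0:ℝ)..x, p.eval u * p.derivative.eval (x - u) ≤ p.eval x * (p.eval x - p.eval 0) :=
  calc ∫ u in (0:ℝ)..x, p.eval u * p.derivative.eval (x - u)
      ≤ ∫ u in (0:ℝ)..x, p.eval x * p.derivative.eval (x - u) := by
        refine integral_mono_on_of_le_Ioo hx.1 (Continuous.intervalIntegrable (by fun_prop) _ _)
          (Continuous.intervalIntegrable (by fun_prop) _ _) fun u hu => ?_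
        exact mul_le_mul_of_nonpos_right (hp ⟨hu.1.le, hu.2.le.trans hx.2⟩ hx hu.2.le)
          (p.derivative_eval_nonpos_of_antitoneOn hp
            ⟨by linarith [hu.2], by linarith [hu.1, hx.2]⟩)
    _ = p.eval x * (p.eval x - p.eval 0) := by
        rw [integral_const_mul, integral_comp_sub_left (fun t => p.derivative.eval t),
          sub_self, sub_zero, integral_eq_sub_of_hasDerivAt (fun t _ => p.hasDerivAt t)
            (p.derivative.continuous.intervalIntegrable _ _)]

theorem le_integral_eval_mul_derivative_eval_sub (hp : AntitoneOn p.eval (Icc 0 c))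
    (hx : x ∈ Icc 0 c) :
    p.eval c * p.eval (c - x) - p.eval x * p.eval 0 - (p.eval c ^ 2 - p.eval x ^ 2) / 2 ≤
      ∫ u in x..c, p.eval u * p.derivative.eval (u - x) := by
  have parts : ∫ u in x..c, p.eval u * p.derivative.eval (u - x) =
      p.eval c * p.eval (c - x) - p.eval x * p.eval 0 -
        ∫ u in x..c, p.derivative.eval u * p.eval (u - x) := by
    rw [integral_mul_deriv_eq_deriv_mul (v := fun t => p.eval (t - x))
      (fun t _ => p.hasDerivAt t) (fun t _ => (p.hasDerivAt (t - x)).comp_sub_const t x)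
      (Continuous.intervalIntegrable (by fun_prop) _ _)
      (Continuous.intervalIntegrable (by fun_prop) _ _), sub_self]
  have square :
      ∫ u in x..c, p.derivative.eval u * p.eval u = (p.eval c ^ 2 - p.eval x ^ 2) / 2 := by
    rw [integral_eq_sub_of_hasDerivAt (f := fun t => p.eval t ^ 2 / 2)
      (fun t _ => (((p.hasDerivAt t).pow 2).div_const 2).congr_deriv (by ring))
      (Continuous.intervalIntegrable (by fun_prop) _ _)]
    ring
  have mono : ∫ u in x..c, p.derivative.eval u * p.eval (u - x) ≤
      ∫ u in x..c, p.derivative.eval u * p.eval u := by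
    refine integral_mono_on_of_le_Ioo hx.2 (Continuous.intervalIntegrable (by fun_prop) _ _)
      (Continuous.intervalIntegrable (by fun_prop) _ _) fun u hu => ?_
    exact mul_le_mul_of_nonpos_left
      (hp ⟨by linarith [hu.1, hx.1], by linarith [hu.2, hx.1]⟩
        ⟨by linarith [hu.1, hx.1], hu.2.le⟩ (by linarith [hx.1]))
      (p.derivative_eval_nonpos_of_antitoneOn hp ⟨by linarith [hu.1, hx.1], hu.2⟩)
  linarith

theorem deriv_phiStep_nonpos (h0 : ∀ t ∈ Icc 0 c, 0 ≤ p.eval t)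
    (hp : AntitoneOn p.eval (Icc 0 c)) (hx : x ∈ Icc 0 c) :
    deriv (phiStep p.eval c) x ≤ 0 := by
  have hc : c ∈ Icc 0 c := ⟨hx.1.trans hx.2, le_rfl⟩
  have hcx : p.eval c ≤ p.eval (c - x) :=
    hp ⟨by linarith [hx.2], by linarith [hx.1]⟩ hc (by linarith [hx.1])
  rw [(hasDerivAt_phiStep p c x).deriv]
  -- the two integral bounds leave at most `p(c)² - 2p(c)p(c-x)`
  nlinarith [integral_eval_mul_derivative_eval_sub_le hp hx,
    le_integral_eval_mul_derivative_eval_sub hp hx, mul_le_mul_of_nonneg_left hcx (h0 c hc)]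

theorem antitoneOn_phiStep (h0 : ∀ t ∈ Icc 0 c, 0 ≤ p.eval t)
    (hp : AntitoneOn p.eval (Icc 0 c)) : AntitoneOn (phiStep p.eval c) (Icc 0 c) := by
  have hd : Differentiable ℝ (phiStep p.eval c) := fun x =>
    (hasDerivAt_phiStep p c x).differentiableAt
  refine antitoneOn_of_deriv_nonpos (convex_Icc 0 c) hd.continuous.continuousOn
    hd.differentiableOn fun x hx => ?_
  rw [interior_Icc] at hx
  exact deriv_phiStep_nonpos h0 hp (Ioo_subset_Icc_self hx)

end PhiStepAntitone

def IsNonnegAntitonePolyOn (f : ℝ → ℝ) (s : Set ℝ) : Prop :=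
  (∃ p : ℝ[X], EqOn f p.eval s) ∧ (∀ x ∈ s, 0 ≤ f x) ∧ AntitoneOn f s

theorem IsNonnegAntitonePolyOn.mono {f : ℝ → ℝ} {s t : Set ℝ} (h : IsNonnegAntitonePolyOn f s)
    (hts : t ⊆ s) : IsNonnegAntitonePolyOn f t :=
  let ⟨⟨p, hp⟩, h0, hf⟩ := h
  ⟨⟨p, hp.mono hts⟩, fun x hx => h0 x (hts hx), hf.mono hts⟩

theorem IsNonnegAntitonePolyOn.phiStep {f : ℝ → ℝ} {c : ℝ}
    (h : IsNonnegAntitonePolyOn f (Icc 0 c)) : IsNonnegAntitonePolyOn (phiStep f c) (Icc 0 c) := by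
  obtain ⟨⟨p, hfp⟩, h0, hf⟩ := h
  have hp0 : ∀ t ∈ Icc 0 c, 0 ≤ p.eval t := fun t ht => (h0 t ht).trans_eq (hfp ht)
  have hfp' := phiStep_congr hfp
  obtain ⟨q, hq⟩ := exists_eval_eq_phiStep p c
  exact ⟨⟨q, fun x hx => (hfp' hx).trans (hq x)⟩, fun x hx => phiStep_nonneg h0 hx,
    (antitoneOn_phiStep hp0 (hf.congr hfp)).congr hfp'.symm⟩

theorem isNonnegAntitonePolyOn_phi (m : ℕ) :
    IsNonnegAntitonePolyOn (phi (m + 1)) (Icc 0 ((2:ℝ) ^ (-((m + 1 : ℕ) : ℤ)))) := by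
  induction m with
  | zero => exact ⟨⟨1, fun _ _ => by simp [phi]⟩, fun _ _ => by simp [phi],
      fun _ _ _ _ _ => by simp [phi]⟩
  | succ m ih =>
    have hexp : -((m + 1 + 1 : ℕ) : ℤ) = -(m + 2 : ℤ) := by push_cast; ring
    have hsub : Icc (0:ℝ) (2 ^ (-(m + 2 : ℤ))) ⊆ Icc 0 (2 ^ (-((m + 1 : ℕ) : ℤ))) :=
      Icc_subset_Icc le_rfl (zpow_le_zpow_right₀ (by norm_num) (by push_cast; omega))
    rw [hexp, phi_add_two]
    exact (ih.mono hsub).phiStep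

/-- Each `φ_n` is nonnegative, continuous, polynomial and non-increasing on `[0, 2^{-n}]`. -/
theorem phi_properties (n : ℕ) (hn : 1 ≤ n) :
    (∀ x ∈ Set.Icc (0:ℝ) ((2:ℝ) ^ (-(n:ℤ))), 0 ≤ phi n x) ∧
      ContinuousOn (phi n) (Set.Icc (0:ℝ) ((2:ℝ) ^ (-(n:ℤ)))) ∧
      (∃ P : Polynomial ℝ, ∀ x ∈ Set.Icc (0:ℝ) ((2:ℝ) ^ (-(n:ℤ))), phi n x = P.eval x) ∧
      AntitoneOn (phi n) (Set.Icc (0:ℝ) ((2:ℝ) ^ (-(n:ℤ)))) := by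
  obtain ⟨m, rfl⟩ := Nat.exists_eq_add_of_le' hn
  obtain ⟨⟨p, hp⟩, h0, hanti⟩ := isNonnegAntitonePolyOn_phi m
  exact ⟨h0, p.continuous.continuousOn.congr hp, ⟨p, hp⟩, hanti⟩
end

section
/- Fix a natural number n ≥ 1. With p_{n,m}(j) the Wagner level-n probabilities for modulus M = 2^m+1, set R_{n,m}(j) = 2^m p_{n,m}(j) and φ_{n,m}(j) = φ_n(j 2^{−m}). Then the constant C_n = sup_{m>n} max_{0 ≤ j ≤ 2^{m−n−1}} R_{n,m}(j) is finite. -/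
open MeasureTheory

/-! ### Auxiliary machinery -/

/-- the left half of a vector. -/
def leftHalf (i : ℕ) (x : Fin (2 ^ (i + 1)) → ℤ) : Fin (2 ^ i) → ℤ :=
  fun k => x ⟨k.1,
    lt_of_lt_of_le k.2 (Nat.pow_le_pow_right (by norm_num) (Nat.le_succ i))⟩

/-- the right half of a vector. -/
def rightHalf (i : ℕ) (x : Fin (2 ^ (i + 1)) → ℤ) : Fin (2 ^ i) → ℤ :=
  fun k => x ⟨2 ^ i + k.1, by
    have hk := k.2; have h2 : (2:ℕ) ^ (i+1) = 2 ^ i + 2 ^ i := by ring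
    omega⟩

/-- the combining step of Wagner's tree. -/
noncomputable def comb (m i : ℕ) : Option ℤ → Option ℤ → Option ℤ
  | some a, some b =>
      if h : ∃ c ∈ Dm (m - (i + 1)), a + b ≡ c [ZMOD ((2 : ℤ) ^ m + 1)] then some h.choose
      else none
  | _, _ => none

lemma wagner_succ (m i : ℕ) (x : Fin (2 ^ (i + 1)) → ℤ) :
    wagner m (i + 1) x = comb m i (wagner m i (leftHalf i x)) (wagner m i (rightHalf i x)) := by
  rw [wagner]
  rfl

lemma comb_eq_some {m i : ℕ} {o₁ o₂ : Option ℤ} {j : ℤ} (h : comb m i o₁ o₂ = some j) :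
    ∃ a b, o₁ = some a ∧ o₂ = some b ∧ j ∈ Dm (m - (i + 1)) ∧
      a + b ≡ j [ZMOD ((2 : ℤ) ^ m + 1)] := by
  match o₁, o₂ with
  | none, o₂ => simp [comb] at h
  | some a, none => simp [comb] at h
  | some a, some b =>
    refine ⟨a, b, rfl, rfl, ?_⟩
    simp only [comb] at h
    split_ifs at h with hc
    · obtain ⟨hmem, hmod⟩ := hc.choose_spec
      obtain rfl : hc.choose = j := Option.some.inj h
      exact ⟨hmem, hmod⟩

lemma leftHalf_mem {m i : ℕ} {x : Fin (2 ^ (i + 1)) → ℤ} (hx : x ∈ vecSpace m (i + 1)) :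
    leftHalf i x ∈ vecSpace m i := by
  simp only [vecSpace, Fintype.mem_piFinset] at hx ⊢
  intro k; exact hx _

lemma rightHalf_mem {m i : ℕ} {x : Fin (2 ^ (i + 1)) → ℤ} (hx : x ∈ vecSpace m (i + 1)) :
    rightHalf i x ∈ vecSpace m i := by
  simp only [vecSpace, Fintype.mem_piFinset] at hx ⊢
  intro k; exact hx _

lemma halves_inj {i : ℕ} {x y : Fin (2 ^ (i + 1)) → ℤ}
    (hL : leftHalf i x = leftHalf i y) (hR : rightHalf i x = rightHalf i y) : x = y := by
  funext k
  have h2 : (2:ℕ) ^ (i+1) = 2 ^ i + 2 ^ i := by ring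
  by_cases hk : (k : ℕ) < 2 ^ i
  · have := congrFun hL ⟨k.1, hk⟩
    simpa [leftHalf] using this
  · have hk2 : k.1 - 2 ^ i < 2 ^ i := by have := k.2; omega
    have := congrFun hR ⟨k.1 - 2 ^ i, hk2⟩
    simp only [rightHalf] at this
    have hEq : (⟨2 ^ i + (k.1 - 2 ^ i), by omega⟩ : Fin (2 ^ (i+1))) = k := by
      apply Fin.ext; simp; omega
    rwa [hEq] at this

/-- the output of level `i` lies in `Dm (m - i)`. -/
lemma wagner_mem_Dm {m : ℕ} : ∀ {i : ℕ} {x : Fin (2 ^ i) → ℤ}, x ∈ vecSpace m i →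
    ∀ {b : ℤ}, wagner m i x = some b → b ∈ Dm (m - i) := by
  intro i
  match i with
  | 0 =>
    intro x hx b hb
    have : x 0 = b := Option.some.inj hb
    simp only [vecSpace, Fintype.mem_piFinset] at hx
    simpa [← this] using hx 0
  | i + 1 =>
    intro x hx b hb
    rw [wagner_succ] at hb
    obtain ⟨a, b', _, _, hmem, _⟩ := comb_eq_some hb
    exact hmem

/-- uniqueness of representatives in `Dm (m - i)` modulo `2^m + 1`. -/
lemma Dm_mod_inj {m i : ℕ} (hm : 1 ≤ m) {b b' : ℤ} (hb : b ∈ Dm (m - i))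
    (hb' : b' ∈ Dm (m - i)) (h : b ≡ b' [ZMOD ((2 : ℤ) ^ m + 1)]) : b = b' := by
  simp only [Dm, Finset.mem_Icc] at hb hb'
  have hdvd : ((2 : ℤ) ^ m + 1) ∣ b' - b := h.dvd
  have hbound : (2 : ℤ) ^ (m - i - 1) + 2 ^ (m - i - 1) ≤ 2 ^ m := by
    rcases le_or_gt i m with him | him
    · rcases Nat.lt_or_ge i m with hlt | hge
      · have h1 : m - i - 1 + 1 = m - i := by omega
        calc (2 : ℤ) ^ (m - i - 1) + 2 ^ (m - i - 1) = 2 ^ (m - i - 1 + 1) := by ring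
          _ ≤ 2 ^ m := by
            apply pow_le_pow_right₀ (by norm_num); omega
      · have : m - i = 0 := by omega
        simp only [this]
        have : (2:ℤ) ^ 1 ≤ 2 ^ m := pow_le_pow_right₀ (by norm_num) hm
        simpa using this
    · have : m - i = 0 := by omega
      simp only [this]
      have : (2:ℤ) ^ 1 ≤ 2 ^ m := pow_le_pow_right₀ (by norm_num) hm
      simpa using this
  have habs : |b' - b| < (2 : ℤ) ^ m + 1 := by
    rw [abs_lt]
    constructor <;> nlinarith [hb.1, hb.2, hb'.1, hb'.2]
  have := Int.eq_zero_of_abs_lt_dvd hdvd habs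
  omega

lemma vecSpace_card (m i : ℕ) (hm : 1 ≤ m) :
    (vecSpace m i).card = (2 ^ m + 1) ^ (2 ^ i) := by
  rw [vecSpace, Fintype.card_piFinset]
  have hDm : (Dm m).card = 2 ^ m + 1 := by
    rw [Dm, Int.card_Icc]
    have h1 : m - 1 + 1 = m := by omega
    have hsum : (2:ℤ) ^ (m-1) + 2 ^ (m-1) = 2 ^ m := by
      have h2 : (2:ℤ) ^ (m-1) + 2 ^ (m-1) = 2 ^ (m-1) * 2 := by ring
      rw [h2, ← pow_succ, h1]
    have h3 : (2:ℤ) ^ (m-1) + 1 - -(2:ℤ) ^ (m-1) = 2 ^ m + 1 := by linarith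
    rw [h3]
    have h4 : ((2:ℤ) ^ m + 1) = ((2 ^ m + 1 : ℕ) : ℤ) := by push_cast; ring
    rw [h4, Int.toNat_natCast]
  simp [hDm, Finset.prod_const]

/-- key counting bound: at most `(2^m+1)^(2^i - 1)` vectors hash to any given value. -/
lemma count_le (m : ℕ) (hm : 1 ≤ m) :
    ∀ i (j : ℤ), ((vecSpace m i).filter (fun x => wagner m i x = some j)).card
      ≤ (2 ^ m + 1) ^ (2 ^ i - 1) := by
  intro i
  induction i with
  | zero =>
    intro j
    have hone : ((2:ℕ) ^ m + 1) ^ (2 ^ 0 - 1) = 1 := by norm_num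
    rw [hone]
    apply Finset.card_le_one.mpr
    intro a ha b hb
    simp only [Finset.mem_filter] at ha hb
    have ha' : a 0 = j := Option.some.inj ha.2
    have hb' : b 0 = j := Option.some.inj hb.2
    funext k
    have hk : k = 0 := by
      apply Fin.ext
      have := k.2
      simp only [pow_zero] at this
      omega
    rw [hk, ha', hb']
  | succ i ih =>
    intro j
    classical
    set F := (vecSpace m (i+1)).filter (fun x => wagner m (i+1) x = some j) with hF
    have hfib : ∀ x ∈ F, leftHalf i x ∈ vecSpace m i := fun x hx =>
      leftHalf_mem (Finset.mem_filter.mp hx).1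
    have key : F.card = ∑ l ∈ vecSpace m i, (F.filter (fun x => leftHalf i x = l)).card :=
      Finset.card_eq_sum_card_fiberwise hfib
    have hterm : ∀ l ∈ vecSpace m i,
        (F.filter (fun x => leftHalf i x = l)).card ≤ (2 ^ m + 1) ^ (2 ^ i - 1) := by
      intro l hl
      set T := F.filter (fun x => leftHalf i x = l) with hT
      rcases T.eq_empty_or_nonempty with hTe | ⟨x₀, hx₀⟩
      · simp [hTe]
      · -- extract the unique right-value b₀
        have hx₀' := hx₀
        simp only [hT, hF, Finset.mem_filter] at hx₀'
        obtain ⟨⟨hx₀v, hx₀w⟩, hx₀l⟩ := hx₀'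
        rw [wagner_succ] at hx₀w
        obtain ⟨a, b₀, hLa, hRb₀, _, hab₀⟩ := comb_eq_some hx₀w
        have hb₀mem : b₀ ∈ Dm (m - i) := wagner_mem_Dm (rightHalf_mem hx₀v) hRb₀
        -- every x in T has wagner(rightHalf x) = some b₀
        have hmap : ∀ x ∈ T, rightHalf i x ∈
            (vecSpace m i).filter (fun r => wagner m i r = some b₀) := by
          intro x hx
          simp only [hT, hF, Finset.mem_filter] at hx
          obtain ⟨⟨hxv, hxw⟩, hxl⟩ := hx
          rw [wagner_succ] at hxw
          obtain ⟨a', b', hLa', hRb', _, hab'⟩ := comb_eq_some hxw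
          rw [hxl, ← hx₀l] at hLa'
          rw [hLa] at hLa'
          obtain rfl : a = a' := Option.some.inj hLa'
          have hb'mem : b' ∈ Dm (m - i) := wagner_mem_Dm (rightHalf_mem hxv) hRb'
          have hmod : b' ≡ b₀ [ZMOD ((2 : ℤ) ^ m + 1)] := by
            have h1 : a + b' ≡ a + b₀ [ZMOD ((2 : ℤ) ^ m + 1)] := hab'.trans hab₀.symm
            exact (Int.ModEq.add_left_cancel (Int.ModEq.refl a) h1)
          obtain rfl : b' = b₀ := Dm_mod_inj hm hb'mem hb₀mem hmod
          exact Finset.mem_filter.mpr ⟨rightHalf_mem hxv, hRb'⟩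
        have hinj : Set.InjOn (rightHalf i) T := by
          intro x hx y hy hxy
          rw [Finset.mem_coe] at hx hy
          simp only [hT, Finset.mem_filter] at hx hy
          exact halves_inj (hx.2.trans hy.2.symm) hxy
        calc T.card ≤ ((vecSpace m i).filter (fun r => wagner m i r = some b₀)).card :=
              Finset.card_le_card_of_injOn _ hmap hinj
          _ ≤ (2 ^ m + 1) ^ (2 ^ i - 1) := ih b₀
    calc F.card = ∑ l ∈ vecSpace m i, (F.filter (fun x => leftHalf i x = l)).card := key
      _ ≤ ∑ _l ∈ vecSpace m i, (2 ^ m + 1) ^ (2 ^ i - 1) := Finset.sum_le_sum hterm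
      _ = (2 ^ m + 1) ^ (2 ^ i) * (2 ^ m + 1) ^ (2 ^ i - 1) := by
          rw [Finset.sum_const, smul_eq_mul, vecSpace_card m i hm]
      _ = (2 ^ m + 1) ^ (2 ^ (i + 1) - 1) := by
          rw [← pow_add]
          congr 1
          have h1 : 1 ≤ (2:ℕ) ^ i := Nat.one_le_two_pow
          have h2 : (2:ℕ) ^ (i+1) = 2 ^ i + 2 ^ i := by ring
          omega

/-- Finiteness of `C_n = sup_{m>n} max_{0 ≤ j ≤ 2^{m-n-1}} 2^m p_{n,m}(j)`. -/
theorem Cn_finite (n : ℕ) (hn : 1 ≤ n) :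
    ∃ C : ℝ, ∀ m : ℕ, n < m → ∀ j : ℤ, 0 ≤ j → j ≤ 2 ^ (m - n - 1) →
      (2:ℝ) ^ m * pim m n j ≤ C := by
  refine ⟨1, fun m hm j _ _ => ?_⟩
  have hm1 : 1 ≤ m := le_trans hn hm.le
  have hcard := vecSpace_card m n hm1
  have hcount := count_le m hm1 n j
  rw [pim, hcard, ← mul_div_assoc,
    div_le_one (by positivity : (0:ℝ) < ((((2 ^ m + 1) ^ (2 ^ n) : ℕ)) : ℝ))]
  have hnat : 2 ^ m * ((vecSpace m n).filter (fun x => wagner m n x = some j)).card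
      ≤ (2 ^ m + 1) ^ (2 ^ n) := by
    calc 2 ^ m * ((vecSpace m n).filter (fun x => wagner m n x = some j)).card
        ≤ (2 ^ m + 1) * (2 ^ m + 1) ^ (2 ^ n - 1) :=
          Nat.mul_le_mul (Nat.le_succ _) hcount
      _ = (2 ^ m + 1) ^ (2 ^ n) := by
          rw [← pow_succ']
          congr 1
          have : 1 ≤ (2:ℕ) ^ n := Nat.one_le_two_pow
          omega
  calc (2:ℝ) ^ m * (((vecSpace m n).filter (fun x => wagner m n x = some j)).card : ℝ)
      = ((2 ^ m * ((vecSpace m n).filter (fun x => wagner m n x = some j)).card : ℕ) : ℝ) := by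
        push_cast; ring
    _ ≤ (((2 ^ m + 1) ^ (2 ^ n) : ℕ) : ℝ) := Nat.cast_le.mpr hnat
end

section
/- Let a be a random L×N matrix with i.i.d. entries uniform on D_m ⊂ ℤ/(2^m+1)ℤ, N = 2^n, m > n. For index vectors i ≠ k in {1,…,L}^N, P(H_n(a_i) = 0 and H_n(a_k) = 0) ≤ p_{n,m}/M, where p_{n,m} = P(H_n(a_i) = 0) and M = 2^m + 1. -/
open MeasureTheory

/-- the sample space of `L × N` matrices with entries in `Dm m`. -/
noncomputable def matSpace (L m N : ℕ) : Finset (Fin L → Fin N → ℤ) :=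
  Fintype.piFinset fun _ => Fintype.piFinset fun _ => Dm m

lemma matSpace_nonempty (L m N : ℕ) : (matSpace L m N).Nonempty :=
  ⟨fun _ _ => 0, by
    simp only [matSpace, Fintype.mem_piFinset]
    intro _ _
    simp only [Dm, Finset.mem_Icc]
    exact ⟨neg_nonpos.mpr (by positivity), by positivity⟩⟩

/-- `W(A)`: the number of Wagner's solutions. -/
noncomputable def Wcount (L m n : ℕ) (A : Fin L → Fin (2 ^ n) → ℤ) : ℕ :=
  (Finset.univ.filter (fun i : Fin (2 ^ n) → Fin L =>
    wagner m n (fun j => A (i j) j) = some 0)).card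

/-! Since `H_n(x) = some v` forces `∑ x ≡ v (mod M)`, the joint event lies in
`{H_n(a_i) = 0} ∩ {∑ a_k ≡ 0}`. Take a column `j` with `i j ≠ k j`: the entry `a_{k j, j}` does
not occur in `a_i`, and `D_m` is a complete residue system mod `M`, so once all other entries are
fixed exactly one of its `M` values gives `∑ a_k ≡ 0`. Hence the intersection has probability
`P(H_n(a_i) = 0) / M`, and `P(H_n(a_i) = 0) = p_{n,m}` because `a_i` is uniform on `D_m^N`. -/

open Finset

section Residues

variable {m : ℕ}

lemma two_pow_eq_two_mul_two_pow_pred (hm : 1 ≤ m) : (2 : ℤ) ^ m = 2 * 2 ^ (m - 1) := by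
  rw [← pow_succ']; congr 1; omega

lemma mem_Dm_iff_bmod_eq (hm : 1 ≤ m) {c : ℤ} : c ∈ Dm m ↔ c.bmod (2 ^ m + 1) = c := by
  have hM : 0 < 2 ^ m + 1 := by positivity
  have h2 := two_pow_eq_two_mul_two_pow_pred hm
  have hlo : -(((2 ^ m + 1 : ℕ) : ℤ) / 2) = -2 ^ (m - 1) := by push_cast; omega
  have hhi : (((2 ^ m + 1 : ℕ) : ℤ) + 1) / 2 = 2 ^ (m - 1) + 1 := by push_cast; omega
  rw [Dm, mem_Icc]
  constructor
  · rintro ⟨hc₁, hc₂⟩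
    exact Int.bmod_eq_of_le (hlo ▸ hc₁) (by omega)
  · intro hc
    have := Int.le_bmod (x := c) hM
    have := Int.bmod_lt (x := c) hM
    omega

lemma bmod_mem_Dm (hm : 1 ≤ m) (t : ℤ) : t.bmod (2 ^ m + 1) ∈ Dm m := by
  rw [mem_Dm_iff_bmod_eq hm, Int.bmod_bmod]

lemma eq_bmod_of_mem_Dm (hm : 1 ≤ m) {c t : ℤ} (hc : c ∈ Dm m)
    (hct : c ≡ t [ZMOD 2 ^ m + 1]) : c = t.bmod (2 ^ m + 1) := by
  rw [← (mem_Dm_iff_bmod_eq hm).mp hc, ← Int.emod_bmod c, ← Int.emod_bmod t]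
  exact congrArg (Int.bmod · _) (by exact_mod_cast hct)

lemma card_Dm (hm : 1 ≤ m) : #(Dm m) = 2 ^ m + 1 := by
  have h2 := two_pow_eq_two_mul_two_pow_pred hm
  rw [Dm, Int.card_Icc, show (2 : ℤ) ^ (m - 1) + 1 - -2 ^ (m - 1) = ((2 ^ m + 1 : ℕ) : ℤ) by
    push_cast; omega, Int.toNat_natCast]

end Residues

lemma sum_fin_two_pow_succ {M : Type*} [AddCommMonoid M] (i : ℕ) (x : Fin (2 ^ (i + 1)) → M) :
    ∑ j, x j = ∑ j : Fin (2 ^ i), x ⟨j, j.2.trans_le (Nat.pow_le_pow_right two_pos i.le_succ)⟩ +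
      ∑ j : Fin (2 ^ i), x ⟨2 ^ i + j, by rw [pow_succ]; omega⟩ := by
  rw [← Fin.sum_congr' x (by ring : 2 ^ i + 2 ^ i = 2 ^ (i + 1)), Fin.sum_univ_add]
  rfl

lemma sum_modEq_of_wagner_eq_some (m : ℕ) :
    ∀ (i : ℕ) (x : Fin (2 ^ i) → ℤ) (v : ℤ),
      wagner m i x = some v → ∑ j, x j ≡ v [ZMOD 2 ^ m + 1]
  | 0, x, v, h => by simp_all [wagner]
  | i + 1, x, v, h => by
    rw [wagner] at h
    split at h
    next a b ha hb =>
      split_ifs at h with hc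
      cases h
      rw [sum_fin_two_pow_succ]
      exact ((sum_modEq_of_wagner_eq_some m i _ a ha).add
        (sum_modEq_of_wagner_eq_some m i _ b hb)).trans hc.choose_spec.2
    next => cases h

lemma sum_update_eq_sub_add {ι G : Type*} [Fintype ι] [DecidableEq ι] [AddCommGroup G]
    (f : ι → G) (j : ι) (d : G) : ∑ i, Function.update f j d i = ∑ i, f i - f j + d := by
  rw [sum_update_of_mem (mem_univ j), ← sum_erase_add _ _ (mem_univ j), sdiff_singleton_eq_erase]
  abel

section SetEntry

variable {α β γ : Type*} [DecidableEq α] [DecidableEq β]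

def setEntry (A : α → β → γ) (r : α) (j : β) (d : γ) : α → β → γ :=
  Function.update A r (Function.update (A r) j d)

@[simp]
lemma setEntry_apply_self (A : α → β → γ) (r : α) (j : β) (d : γ) : setEntry A r j d r j = d := by
  simp [setEntry]

@[simp]
lemma setEntry_setEntry (A : α → β → γ) (r : α) (j : β) (d e : γ) :
    setEntry (setEntry A r j d) r j e = setEntry A r j e := by
  simp [setEntry]

@[simp]
lemma setEntry_eq_self (A : α → β → γ) (r : α) (j : β) : setEntry A r j (A r j) = A := by
  simp [setEntry]

lemma setEntry_apply_of_ne (A : α → β → γ) {r r' : α} {j j' : β} (d : γ)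
    (h : r' ≠ r ∨ j' ≠ j) : setEntry A r j d r' j' = A r' j' := by
  rcases eq_or_ne r' r with rfl | hr
  · simp [setEntry, h.resolve_left (not_not.mpr rfl)]
  · simp [setEntry, hr]

lemma path_setEntry_of_ne (A : α → β → γ) {i k : β → α} {j : β} (hj : i j ≠ k j) (d : γ) :
    (fun j' => setEntry A (k j) j d (i j') j') = fun j' => A (i j') j' := by
  funext j'
  refine setEntry_apply_of_ne A d (or_iff_not_imp_right.mpr fun h => ?_)
  rwa [not_not.mp h]

lemma path_setEntry (A : α → β → γ) (k : β → α) (j : β) (d : γ) :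
    (fun j' => setEntry A (k j) j d (k j') j') = Function.update (fun j' => A (k j') j') j d := by
  funext j'
  rcases eq_or_ne j' j with rfl | hj
  · simp
  · rw [Function.update_of_ne hj, setEntry_apply_of_ne A d (Or.inr hj)]

end SetEntry

section MatSpace

variable {L N m : ℕ}

lemma entry_mem_Dm {A : Fin L → Fin N → ℤ} (hA : A ∈ matSpace L m N) (r : Fin L) (c : Fin N) :
    A r c ∈ Dm m := by
  simp only [matSpace, Fintype.mem_piFinset] at hA
  exact hA r c

lemma setEntry_mem_matSpace {A : Fin L → Fin N → ℤ} (hA : A ∈ matSpace L m N) (r : Fin L)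
    (c : Fin N) {d : ℤ} (hd : d ∈ Dm m) : setEntry A r c d ∈ matSpace L m N := by
  simp only [matSpace, Fintype.mem_piFinset]
  intro r' c'
  by_cases h : r' = r ∧ c' = c
  · obtain ⟨rfl, rfl⟩ := h
    simpa using hd
  · rw [setEntry_apply_of_ne A d (not_and_or.mp h)]
    exact entry_mem_Dm hA r' c'

theorem card_filter_pathSum_modEq_mul (hm : 1 ≤ m) (P : (Fin L → Fin N → ℤ) → Prop)
    [DecidablePred P] (k : Fin N → Fin L) (j : Fin N)
    (hP : ∀ A d, P (setEntry A (k j) j d) ↔ P A) (t : ℤ) :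
    #{A ∈ matSpace L m N | P A ∧ ∑ j', A (k j') j' ≡ t [ZMOD 2 ^ m + 1]} * (2 ^ m + 1) =
      #{A ∈ matSpace L m N | P A} := by
  have hsum (A : Fin L → Fin N → ℤ) (d : ℤ) :
      ∑ j', setEntry A (k j) j d (k j') j' = ∑ j', A (k j') j' - A (k j) j + d := by
    rw [path_setEntry, sum_update_eq_sub_add]
  let fit (A : Fin L → Fin N → ℤ) : ℤ := (t - (∑ j', A (k j') j' - A (k j) j)).bmod (2 ^ m + 1)
  rw [← card_Dm hm, ← card_product]
  refine card_nbij' (fun p => setEntry p.1 (k j) j p.2)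
    (fun A => (setEntry A (k j) j (fit A), A (k j) j)) ?_ ?_ ?_ ?_
  · rintro ⟨B, d⟩ hB
    simp only [coe_product, coe_filter, Set.mem_prod, Set.mem_ofPred_eq, mem_coe] at hB ⊢
    exact ⟨setEntry_mem_matSpace hB.1.1 _ _ hB.2, (hP B d).mpr hB.1.2.1⟩
  · intro A hA
    simp only [coe_product, coe_filter, Set.mem_prod, Set.mem_ofPred_eq, mem_coe] at hA ⊢
    refine ⟨⟨setEntry_mem_matSpace hA.1 _ _ (bmod_mem_Dm hm _), (hP A _).mpr hA.2, ?_⟩,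
      entry_mem_Dm hA.1 _ _⟩
    have hfitA : fit A ≡ t - (∑ j', A (k j') j' - A (k j) j) [ZMOD 2 ^ m + 1] := by
      exact_mod_cast (Int.bmod_emod : Int.ModEq (2 ^ m + 1 : ℕ) _ _)
    rw [hsum]
    simpa using hfitA.add_left (∑ j', A (k j') j' - A (k j) j)
  · rintro ⟨B, d⟩ hB
    simp only [coe_product, coe_filter, Set.mem_prod, Set.mem_ofPred_eq, mem_coe] at hB
    obtain ⟨⟨hBS, -, hBt⟩, -⟩ := hB
    have hfit : fit (setEntry B (k j) j d) = B (k j) j := by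
      simp only [fit, hsum, setEntry_apply_self, add_sub_cancel_right]
      refine (eq_bmod_of_mem_Dm hm (entry_mem_Dm hBS _ _) ?_).symm
      simpa using hBt.sub_right (∑ j', B (k j') j' - B (k j) j)
    simp [hfit]
  · intro A _
    simp

end MatSpace

lemma card_filter_comp_eq_mul {α β : Type*} [DecidableEq β] {s : Finset α} {t : Finset β}
    {f : α → β} (hf : Set.MapsTo f s t) {C : ℕ} (hC : ∀ b ∈ t, #{a ∈ s | f a = b} = C)
    (Q : β → Prop) [DecidablePred Q] : #{a ∈ s | Q (f a)} = #{b ∈ t | Q b} * C := by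
  have hfQ : Set.MapsTo f (({a ∈ s | Q (f a)} : Finset α) : Set α)
      (({b ∈ t | Q b} : Finset β) : Set β) := fun a ha => by
    simp only [mem_coe, mem_filter] at ha ⊢
    exact ⟨hf ha.1, ha.2⟩
  rw [card_eq_sum_card_fiberwise hfQ, ← smul_eq_mul, ← sum_const]
  refine sum_congr rfl fun b hb => ?_
  rw [filter_filter, ← hC b (mem_filter.mp hb).1]
  congr 1
  exact filter_congr fun a _ => ⟨And.right, fun h => ⟨h ▸ (mem_filter.mp hb).2, h⟩⟩

section SetPath

variable {α β γ : Type*} [DecidableEq α]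

def setPath (A : α → β → γ) (i : β → α) (x : β → γ) : α → β → γ :=
  fun r c => if r = i c then x c else A r c

lemma path_setPath (A : α → β → γ) (i : β → α) (x : β → γ) :
    (fun j => setPath A i x (i j) j) = x := by
  simp [setPath]

@[simp]
lemma setPath_setPath (A : α → β → γ) (i : β → α) (x y : β → γ) :
    setPath (setPath A i x) i y = setPath A i y := by
  funext r c
  simp only [setPath]
  split_ifs <;> rfl

lemma setPath_path (A : α → β → γ) (i : β → α) : setPath A i (fun j => A (i j) j) = A := by
  funext r c
  simp only [setPath]
  split_ifs with h
  · rw [h]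
  · rfl

end SetPath

section PathMarginal

variable {L N m : ℕ}

lemma setPath_mem_matSpace {A : Fin L → Fin N → ℤ} (hA : A ∈ matSpace L m N) (i : Fin N → Fin L)
    {x : Fin N → ℤ} (hx : x ∈ Fintype.piFinset fun _ => Dm m) : setPath A i x ∈ matSpace L m N := by
  simp only [matSpace, Fintype.mem_piFinset] at hA hx ⊢
  intro r c
  simp only [setPath]
  split_ifs
  exacts [hx c, hA r c]

lemma card_fiber_path_eq (i : Fin N → Fin L) {x y : Fin N → ℤ}
    (hx : x ∈ Fintype.piFinset fun _ => Dm m) (hy : y ∈ Fintype.piFinset fun _ => Dm m) :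
    #{A ∈ matSpace L m N | (fun j => A (i j) j) = x} =
      #{A ∈ matSpace L m N | (fun j => A (i j) j) = y} := by
  refine card_nbij' (setPath · i y) (setPath · i x) ?_ ?_ ?_ ?_
  · intro A hA
    simp only [coe_filter, Set.mem_ofPred_eq] at hA ⊢
    exact ⟨setPath_mem_matSpace hA.1 i hy, path_setPath A i y⟩
  · intro A hA
    simp only [coe_filter, Set.mem_ofPred_eq] at hA ⊢
    exact ⟨setPath_mem_matSpace hA.1 i hx, path_setPath A i x⟩
  · exact fun A hA => by simp only [setPath_setPath, ← (mem_filter.mp hA).2, setPath_path]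
  · exact fun A hA => by simp only [setPath_setPath, ← (mem_filter.mp hA).2, setPath_path]

theorem card_filter_path_mul (i : Fin N → Fin L) (Q : (Fin N → ℤ) → Prop) [DecidablePred Q] :
    #{A ∈ matSpace L m N | Q fun j => A (i j) j} * #(Fintype.piFinset fun _ : Fin N => Dm m) =
      #{x ∈ Fintype.piFinset fun _ => Dm m | Q x} * #(matSpace L m N) := by
  classical
  set V := Fintype.piFinset fun _ : Fin N => Dm m
  obtain ⟨x₀, hx₀⟩ : V.Nonempty := Fintype.piFinset_nonempty.mpr fun _ => Dm_nonempty m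
  have hpath : Set.MapsTo (fun (A : Fin L → Fin N → ℤ) j => A (i j) j)
      (matSpace L m N : Set (Fin L → Fin N → ℤ)) (V : Set (Fin N → ℤ)) := fun A hA => by
    simpa [V] using fun j => entry_mem_Dm hA (i j) j
  have hfiber (x) (hx : x ∈ V) := card_fiber_path_eq (L := L) i hx hx₀
  have hall := card_filter_comp_eq_mul hpath hfiber fun _ => True
  simp only [filter_true] at hall
  rw [card_filter_comp_eq_mul hpath hfiber Q, hall]
  ring

end PathMarginal

lemma PMF.toReal_toMeasure_uniformOfFinset {α : Type*} [MeasurableSpace α]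
    [MeasurableSingletonClass α] [Countable α] {s : Finset α} (hs : s.Nonempty) (p : α → Prop)
    [DecidablePred p] :
    ((PMF.uniformOfFinset s hs).toMeasure {a | p a}).toReal = #{a ∈ s | p a} / #s := by
  rw [PMF.toMeasure_uniformOfFinset_apply hs _ (Set.to_countable _).measurableSet,
    ENNReal.toReal_div]
  simp

theorem joint_wagner_bound_general (L m n : ℕ) (hmn : n < m)
    (i k : Fin (2 ^ n) → Fin L) (hik : i ≠ k) :
    (((PMF.uniformOfFinset (matSpace L m (2 ^ n))
          (matSpace_nonempty L m (2 ^ n))).toMeasure)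
        {A | wagner m n (fun j => A (i j) j) = some 0 ∧
          wagner m n (fun j => A (k j) j) = some 0}).toReal ≤
      pim m n 0 / ((2:ℝ) ^ m + 1) := by
  classical
  obtain ⟨j, hj⟩ := Function.ne_iff.mp hik
  have hjoint : #{A ∈ matSpace L m (2 ^ n) | wagner m n (fun j => A (i j) j) = some 0 ∧
        wagner m n (fun j => A (k j) j) = some 0} ≤
      #{A ∈ matSpace L m (2 ^ n) | wagner m n (fun j => A (i j) j) = some 0 ∧
        ∑ j, A (k j) j ≡ 0 [ZMOD 2 ^ m + 1]} :=
    card_le_card <| monotone_filter_right _ fun A _ h =>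
      ⟨h.1, sum_modEq_of_wagner_eq_some m n _ 0 h.2⟩
  have hresidue := card_filter_pathSum_modEq_mul (m := m) (by omega)
    (fun A => wagner m n (fun j => A (i j) j) = some 0) k j
    (fun A d => by rw [path_setEntry_of_ne A hj]) 0
  have hmarginal : #{A ∈ matSpace L m (2 ^ n) | wagner m n (fun j => A (i j) j) = some 0} *
      #(vecSpace m n) = #{x ∈ vecSpace m n | wagner m n x = some 0} * #(matSpace L m (2 ^ n)) :=
    card_filter_path_mul i (wagner m n · = some 0)
  have hcount := calc
    _ ≤ _ := Nat.mul_le_mul_right (#(vecSpace m n) * (2 ^ m + 1)) hjoint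
    _ = _ := by rw [mul_comm #(vecSpace m n), ← mul_assoc, hresidue, hmarginal]
  have hS : (0 : ℝ) < #(matSpace L m (2 ^ n)) :=
    mod_cast card_pos.mpr (matSpace_nonempty L m (2 ^ n))
  have hV : (0 : ℝ) < #(vecSpace m n) := mod_cast card_pos.mpr (vecSpace_nonempty m n)
  rw [PMF.toReal_toMeasure_uniformOfFinset, pim, div_div, div_le_div_iff₀ hS (by positivity)]
  exact_mod_cast hcount

/-- For distinct index vectors `i ≠ k`,
`P(H_n(a_i) = 0 and H_n(a_k) = 0) ≤ p_{n,m}/M` with `M = 2^m + 1`. -/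
theorem joint_wagner_bound (L m n : ℕ) (hL : 2 ≤ L) (hn : 1 ≤ n) (hmn : n < m)
    (i k : Fin (2 ^ n) → Fin L) (hik : i ≠ k) :
    (((PMF.uniformOfFinset (matSpace L m (2 ^ n))
          (matSpace_nonempty L m (2 ^ n))).toMeasure)
        {A | wagner m n (fun j => A (i j) j) = some 0 ∧
          wagner m n (fun j => A (k j) j) = some 0}).toReal ≤
      pim m n 0 / ((2:ℝ) ^ m + 1) :=
  joint_wagner_bound_general L m n hmn i k hik
end
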